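/- Let (W,S) be a Coxeter system with root system Φ and fundamental chamber C. If α ∈ Φ ∩ C then α is a positive root, and if moreover (W,S) is irreducible then W is finite. -/

import Mathlib

open scoped BigOperators

/-- Nonnegative conical span of a subset of a real vector space. -/
def nnCone {V : Type*} [AddCommGroup V] [Module ℝ V] (Γ : Set V) : Set V :=
  { v | ∃ (s : Finset V) (c : V → ℝ), ↑s ⊆ Γ ∧ (∀ x ∈ s, 0 ≤ c x) ∧ v = ∑ x ∈ s, c x • x }

/-- A based root system for a Coxeter system, in a real quadratic space. -/
structure BasedRootSystem (V : Type*) [AddCommGroup V] [Module ℝ V] where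
  form : V →ₗ[ℝ] V →ₗ[ℝ] ℝ
  form_symm : ∀ u v, form u v = form v u
  simples : Set V
  posIndep : ∀ s : Finset V, ↑s ⊆ simples → ∀ c : V → ℝ,
      (∀ v ∈ s, 0 < c v) → ∑ v ∈ s, c v • v = 0 → s = ∅
  norm_one : ∀ α ∈ simples, form α α = 1
  pairing : ∀ α ∈ simples, ∀ β ∈ simples, α ≠ β →
      (∃ m : ℕ, 2 ≤ m ∧ form α β = -Real.cos (Real.pi / (m : ℝ))) ∨ form α β ≤ -1

namespace BasedRootSystem

variable {V : Type*} [AddCommGroup V] [Module ℝ V]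

/-- `g` is the reflection in the vector `α` (so `g v = v - ⟨v, α^∨⟩ α` with
`α^∨ = (2/⟨α,α⟩)α`). -/
def IsRefl (R : BasedRootSystem V) (α : V) (g : V ≃ₗ[ℝ] V) : Prop :=
  ∀ v, g v = v - ((2 / R.form α α) * R.form v α) • α

/-- The Coxeter group `W`, generated by the simple reflections. -/
def W (R : BasedRootSystem V) : Subgroup (V ≃ₗ[ℝ] V) :=
  Subgroup.closure { g | ∃ α ∈ R.simples, R.IsRefl α g }

/-- The reflection subgroup generated by reflections in the elements of `Δ`. -/
def subW (R : BasedRootSystem V) (Δ : Set V) : Subgroup (V ≃ₗ[ℝ] V) :=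
  Subgroup.closure { g | ∃ α ∈ Δ, R.IsRefl α g }

/-- The root system `Φ = WΠ`. -/
def roots (R : BasedRootSystem V) : Set V :=
  { β | ∃ w ∈ R.W, ∃ α ∈ R.simples, β = w α }

/-- The positive roots `Φ⁺ = Φ ∩ ℝ_{≥0}Π`. -/
def posRoots (R : BasedRootSystem V) : Set V := R.roots ∩ nnCone R.simples

/-- The fundamental chamber `𝒞`. -/
def chamber (R : BasedRootSystem V) : Set V := { v | ∀ α ∈ R.simples, 0 ≤ R.form v α }

/-- `𝒦 = ℝ_{≥0}Π ∩ (−𝒞)`. -/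
def K (R : BasedRootSystem V) : Set V :=
  nnCone R.simples ∩ { v | ∀ α ∈ R.simples, R.form v α ≤ 0 }

/-- The imaginary cone `𝒵 = ⋃_{w ∈ W} w(𝒦)`. -/
def imaginaryCone (R : BasedRootSystem V) : Set V :=
  { v | ∃ w ∈ R.W, ∃ k ∈ R.K, v = w k }

/-- The standard length function of `(W,S)`. -/
noncomputable def length (R : BasedRootSystem V) (w : V ≃ₗ[ℝ] V) : ℕ :=
  sInf { n | ∃ l : List (V ≃ₗ[ℝ] V), l.length = n ∧
      (∀ g ∈ l, ∃ α ∈ R.simples, R.IsRefl α g) ∧ w = l.prod }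

/-- Irreducibility of the Coxeter system: the Coxeter graph on `Π` is connected. -/
def Irred (R : BasedRootSystem V) : Prop :=
  ∀ A B : Set V, A ∪ B = R.simples → (∀ a ∈ A, ∀ b ∈ B, R.form a b = 0) →
    A = ∅ ∨ B = ∅

/-- `Δ` is a support of `v`: `v` is a strictly positive combination of `Δ ⊆ Π`. -/
def IsSupport (R : BasedRootSystem V) (Δ : Finset V) (v : V) : Prop :=
  ↑Δ ⊆ R.simples ∧ ∃ c : V → ℝ, (∀ x ∈ Δ, 0 < c x) ∧ v = ∑ x ∈ Δ, c x • x

/-- `Δ` is connected in the Coxeter graph. -/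
def ConnSubset (R : BasedRootSystem V) (Δ : Finset V) : Prop :=
  ∀ x ∈ Δ, ∀ y ∈ Δ, Relation.ReflTransGen
    (fun a b => a ∈ Δ ∧ b ∈ Δ ∧ R.form a b ≠ 0) x y

end BasedRootSystem

/-!
Every root `w β` is positive or negative. This is proved by induction on `ℓ(w)` in the form
`ℓ(w) ≤ ℓ(w s_β) → w β ≥ 0`: if `s_τ` is a last letter of `w` and `u` is the shortest element of
the coset `w ⟨s_β, s_τ⟩`, then `u β` and `u τ` are positive by induction, and a computation with
Chebyshev polynomials in the dihedral group `⟨s_β, s_τ⟩` shows that `w β` is a combination of them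
with coefficients of one sign; the negative sign is ruled out by the exchange condition. A negative
root `α` cannot lie in `𝒞`, since then `⟨α, α⟩ = -⟨α, -α⟩ ≤ 0`.

If `(W,S)` is irreducible and `α ∈ Φ ∩ 𝒞`, the coefficients `c` of `α` are positive on all of `Π`
(so `Π` is finite), and `G c ≥ 0`, `⟨c, G c⟩ = ⟨α, α⟩ = 1` for the Gram matrix `G`, whose
off-diagonal entries are `≤ 0`. Writing `x = c w`, the identity
`⟨x, G x⟩ = ½ ∑ (-G_ij) c_i c_j (w_i - w_j)² + ∑ (G c)_i c_i w_i²` and irreducibility show that `G`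
is positive definite. Then `W` acts by isometries of the Euclidean space `span Π`, and the orbit of
the vector `v₀` with `⟨v₀, Π⟩ = 1` is bounded and `1`-separated: a `w ≠ 1` makes some `w τ`
negative, so `⟨v₀ - w v₀, w τ⟩ ≤ -1`. Hence the orbit, and with it `W`, is finite.
-/

open Matrix Polynomial.Chebyshev Real

lemma nnCone_eq_hull {V : Type*} [AddCommGroup V] [Module ℝ V] (Γ : Set V) :
    nnCone Γ = PointedCone.hull ℝ Γ := by
  ext v
  rw [SetLike.mem_coe]
  constructor
  · rintro ⟨s, c, hs, hc, rfl⟩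
    exact Submodule.sum_mem _ fun x hx =>
      PointedCone.smul_mem _ (hc x hx) (PointedCone.subset_hull (hs hx))
  · rw [PointedCone.mem_hull_set]
    rintro ⟨c, hc, hc0, rfl⟩
    exact ⟨c.support, c, hc, fun x _ => hc0 x, rfl⟩

lemma PointedCone.nonneg_of_mem_hull {V : Type*} [AddCommGroup V] [Module ℝ V]
    {f : V →ₗ[ℝ] ℝ} {Γ : Set V} (hf : ∀ x ∈ Γ, 0 ≤ f x) {v : V}
    (hv : v ∈ PointedCone.hull ℝ Γ) : 0 ≤ f v := by
  induction hv using Submodule.span_induction with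
  | mem x hx => exact hf x hx
  | zero => simp
  | add x y _ _ hx hy => rw [map_add]; exact add_nonneg hx hy
  | smul t x _ hx => rw [← Nonneg.coe_smul, map_smul, smul_eq_mul]; exact mul_nonneg t.2 hx

lemma Real.sin_mul_sin_nonneg_of_mem_Icc {x y : ℝ} (n : ℤ)
    (hx : x ∈ Set.Icc (n * π) ((n + 1) * π)) (hy : y ∈ Set.Icc (n * π) ((n + 1) * π)) :
    0 ≤ sin x * sin y := by
  have hsin : ∀ z, sin z = (-1) ^ n * sin (z - n * π) := fun z => by
    rw [← sin_add_int_mul_pi, sub_add_cancel]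
  have hsq : ((-1 : ℝ) ^ n) * (-1) ^ n = 1 := by rw [← mul_zpow]; norm_num
  rw [hsin x, hsin y, mul_mul_mul_comm, hsq, one_mul]
  exact mul_nonneg (sin_nonneg_of_nonneg_of_le_pi (by linarith [hx.1]) (by linarith [hx.2]))
    (sin_nonneg_of_nonneg_of_le_pi (by linarith [hy.1]) (by linarith [hy.2]))

namespace Polynomial.Chebyshev

lemma two_mul_mul_U_eval_sub_U_eval {c : ℝ} {j k : ℤ} (h : |j - k| = 1) :
    2 * c * (U ℝ k).eval c - (U ℝ j).eval c = (U ℝ (2 * k - j)).eval c := by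
  rcases abs_eq zero_le_one |>.1 h with h | h
  · rw [show j = k + 1 by omega, show 2 * k - (k + 1) = k - 1 by ring, U_sub_one]; simp
  · rw [show j = k - 1 by omega, show 2 * k - (k - 1) = k + 1 by ring, U_add_one]; simp

lemma U_eval_mul_nonneg_cos_pi_div {m : ℕ} (hm : 2 ≤ m) (k : ℤ) :
    0 ≤ (U ℝ k).eval (cos (π / m)) * (U ℝ (k + 1)).eval (cos (π / m)) := by
  have hm0 : (0 : ℝ) < m := by positivity
  have hmZ : (0 : ℤ) < m := by exact_mod_cast hm0
  have hsin : 0 < sin (π / m) :=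
    sin_pos_of_pos_of_lt_pi (by positivity) (div_lt_self pi_pos (by exact_mod_cast hm))
  have hprod : (U ℝ k).eval (cos (π / m)) * (U ℝ (k + 1)).eval (cos (π / m)) * sin (π / m) ^ 2
      = sin ((k + 1) * (π / m)) * sin (((k + 1 : ℤ) + 1) * (π / m)) := by
    rw [← U_real_cos, ← U_real_cos]; ring
  refine (mul_nonneg_iff_of_pos_right (pow_pos hsin 2)).1 (hprod ▸ ?_)
  -- the angles `(k + 1)π/m` and `(k + 2)π/m` lie in one interval `[nπ, (n + 1)π]`
  obtain ⟨n, h1, h2⟩ : ∃ n : ℤ, n * m ≤ k + 1 ∧ k + 1 + 1 ≤ (n + 1) * m :=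
    ⟨_, Int.ediv_mul_le _ hmZ.ne', Int.lt_ediv_add_one_mul_self _ hmZ⟩
  have h1' : (n : ℝ) * m ≤ k + 1 := by exact_mod_cast h1
  have h2' : (k : ℝ) + 1 + 1 ≤ (n + 1) * m := by exact_mod_cast h2
  have hIcc : ∀ t : ℝ, n * m ≤ t → t ≤ (n + 1) * m →
      t * (π / m) ∈ Set.Icc (n * π) ((n + 1) * π) := fun t ht1 ht2 =>
    ⟨calc n * π = (n * m) * (π / m) := by field_simp
        _ ≤ t * (π / m) := by gcongr,
      calc t * (π / m) ≤ ((n + 1) * m) * (π / m) := by gcongr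
        _ = (n + 1) * π := by field_simp⟩
  exact Real.sin_mul_sin_nonneg_of_mem_Icc n (hIcc _ h1' (by linarith))
    (hIcc _ (by push_cast; linarith) (by push_cast; linarith))

lemma U_eval_nonneg_of_one_le {c : ℝ} (hc : 1 ≤ c) {n : ℤ} (hn : -1 ≤ n) :
    0 ≤ (U ℝ n).eval c := by
  have key : ∀ n : ℕ, 0 ≤ (U ℝ (n - 1)).eval c ∧ (U ℝ (n - 1)).eval c ≤ (U ℝ n).eval c := by
    intro n
    induction n with
    | zero => simp
    | succ n ih =>
      have hrec : (U ℝ (n + 1)).eval c = 2 * c * (U ℝ n).eval c - (U ℝ (n - 1)).eval c := by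
        simp [U_add_one]
      push_cast
      rw [add_sub_cancel_right, hrec]
      constructor <;> nlinarith [ih.1, ih.2]
  obtain ⟨n, rfl⟩ : ∃ m : ℕ, n = m - 1 := ⟨(n + 1).toNat, by omega⟩
  exact (key n).1

lemma U_eval_mul_nonneg_of_one_le {c : ℝ} (hc : 1 ≤ c) (k : ℤ) :
    0 ≤ (U ℝ k).eval c * (U ℝ (k + 1)).eval c := by
  rcases le_or_gt (-1) k with hk | hk
  · exact mul_nonneg (U_eval_nonneg_of_one_le hc hk) (U_eval_nonneg_of_one_le hc (by omega))
  · have h1 : U ℝ k = -U ℝ (-k - 2) := by rw [← U_neg, neg_neg]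
    have h2 : U ℝ (k + 1) = -U ℝ (-k - 3) := by
      rw [show -k - 3 = -(k + 1) - 2 by ring, ← U_neg, neg_neg]
    rw [h1, h2, Polynomial.eval_neg, Polynomial.eval_neg, neg_mul_neg]
    exact mul_nonneg (U_eval_nonneg_of_one_le hc (by omega)) (U_eval_nonneg_of_one_le hc (by omega))

end Polynomial.Chebyshev

lemma Matrix.dotProduct_mulVec_mul_eq_sum {ι : Type*} [Fintype ι] {A : Matrix ι ι ℝ}
    (hA : A.IsSymm) (c w : ι → ℝ) :
    (c * w) ⬝ᵥ A *ᵥ (c * w) = ∑ i, ∑ j, -A i j * c i * c j * (w i - w j) ^ 2 / 2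
      + ∑ i, (A *ᵥ c) i * c i * w i ^ 2 := by
  have hswap : ∑ i, ∑ j, A i j * c i * c j * w j ^ 2 = ∑ i, ∑ j, A i j * c i * c j * w i ^ 2 := by
    rw [Finset.sum_comm]
    refine Finset.sum_congr rfl fun i _ => Finset.sum_congr rfl fun j _ => ?_
    rw [hA.apply i j]
    ring
  simp only [dotProduct, mulVec, Pi.mul_apply, Finset.sum_mul, Finset.mul_sum]
  rw [← sub_eq_zero, ← zero_div (2 : ℝ), ← sub_eq_zero.2 hswap]
  simp only [Finset.sum_div, ← Finset.sum_sub_distrib, ← Finset.sum_add_distrib]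
  refine Finset.sum_congr rfl fun i _ => Finset.sum_congr rfl fun j _ => ?_
  ring

theorem Matrix.posDef_of_offDiag_nonpos {ι : Type*} [Fintype ι] {A : Matrix ι ι ℝ}
    (hA : A.IsSymm) (hoff : ∀ i j, i ≠ j → A i j ≤ 0) {c : ι → ℝ} (hc : ∀ i, 0 < c i)
    (hAc : ∀ i, 0 ≤ (A *ᵥ c) i) (hAc' : ∃ i, 0 < (A *ᵥ c) i)
    (hirr : ∀ S : Set ι, (∀ i ∈ S, ∀ j ∉ S, A i j = 0) → S = ∅ ∨ S = Set.univ) : A.PosDef := by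
  refine PosDef.of_dotProduct_mulVec_pos (by simpa [IsHermitian] using hA.eq) fun x hx => ?_
  set w : ι → ℝ := fun i => x i / c i
  have hxw : x = c * w := funext fun i => by simp [w, mul_div_cancel₀ _ (hc i).ne']
  rw [star_trivial, hxw, dotProduct_mulVec_mul_eq_sum hA]
  have h1 : ∀ i j, 0 ≤ -A i j * c i * c j * (w i - w j) ^ 2 / 2 := fun i j => by
    rcases eq_or_ne i j with rfl | hij
    · simp
    · exact div_nonneg (mul_nonneg (mul_nonneg (mul_nonneg (neg_nonneg.2 (hoff i j hij))
        (hc i).le) (hc j).le) (sq_nonneg _)) two_pos.le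
  have h2 : ∀ i, 0 ≤ (A *ᵥ c) i * c i * w i ^ 2 := fun i =>
    mul_nonneg (mul_nonneg (hAc i) (hc i).le) (sq_nonneg _)
  have h1' : ∀ i, 0 ≤ ∑ j, -A i j * c i * c j * (w i - w j) ^ 2 / 2 := fun i =>
    Finset.sum_nonneg fun j _ => h1 i j
  refine lt_of_le_of_ne (add_nonneg (Finset.sum_nonneg fun i _ => h1' i)
    (Finset.sum_nonneg fun i _ => h2 i)) fun h0 => hx ?_
  rw [eq_comm, add_eq_zero_iff_of_nonneg (Finset.sum_nonneg fun i _ => h1' i)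
    (Finset.sum_nonneg fun i _ => h2 i), Finset.sum_eq_zero_iff_of_nonneg fun i _ => h1' i,
    Finset.sum_eq_zero_iff_of_nonneg fun i _ => h2 i] at h0
  -- every term vanishes: `w` is constant along the nonzero entries of `A` and vanishes at `i₀`
  have hedge : ∀ i j, A i j ≠ 0 → w i = w j := fun i j hij => by
    have := (Finset.sum_eq_zero_iff_of_nonneg fun j _ => h1 i j).1 (h0.1 i (Finset.mem_univ _)) j
      (Finset.mem_univ _)
    have := (hc i).ne'
    have := (hc j).ne'
    simp_all [sub_eq_zero]
  obtain ⟨i₀, hi₀⟩ := hAc'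
  have hw₀ : w i₀ = 0 := by simpa [hi₀.ne', (hc i₀).ne'] using h0.2 i₀ (Finset.mem_univ _)
  rcases hirr {i | w i = 0} fun i hi j hj => by_contra fun h => hj ((hedge i j h).symm.trans hi)
    with h | h
  · exact (Set.eq_empty_iff_forall_notMem.1 h i₀ hw₀).elim
  · rw [hxw]
    ext i
    simp [show w i = 0 from Set.eq_univ_iff_forall.1 h i]

lemma Metric.finite_of_isBounded_of_pairwise_le_dist {X : Type*} [PseudoMetricSpace X]
    [ProperSpace X] {s : Set X} (hs : Bornology.IsBounded s) {ε : ℝ} (hε : 0 < ε)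
    (hsep : s.Pairwise fun x y => ε ≤ dist x y) : s.Finite := by
  obtain ⟨t, ht, hst⟩ := Metric.totallyBounded_iff.1
    (hs.isCompact_closure.totallyBounded.subset subset_closure) (ε / 2) (half_pos hε)
  refine (ht.biUnion fun y _ => (?_ : (s ∩ Metric.ball y (ε / 2)).Finite)).subset fun x hx => ?_
  · refine Set.Subsingleton.finite fun x hx x' hx' => by_contra fun hne => ?_
    have := dist_triangle_right x x' y
    linarith [hsep hx.1 hx'.1 hne, Metric.mem_ball.1 hx.2, Metric.mem_ball.1 hx'.2]
  · obtain ⟨y, hy, hxy⟩ := Set.mem_iUnion₂.1 (hst hx)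
    exact Set.mem_biUnion hy ⟨hx, hxy⟩

theorem finite_of_form_separated {V : Type*} [AddCommGroup V] [Module ℝ V]
    (B : V →ₗ[ℝ] V →ₗ[ℝ] ℝ) (hB : ∀ u v, B u v = B v u) (U : Submodule ℝ V)
    [FiniteDimensional ℝ U] (hpos : ∀ u ∈ U, u ≠ 0 → 0 < B u u) {s : Set V} (hsU : s ⊆ U)
    {r : ℝ} (hr : ∀ x ∈ s, B x x ≤ r) (hsep : s.Pairwise fun x y => 1 ≤ B (x - y) (x - y)) :
    s.Finite := by
  have hnonneg : ∀ u : U, 0 ≤ B u u := fun u => by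
    by_cases hu : (u : V) = 0
    · simp [hu]
    · exact (hpos u u.2 hu).le
  let core : InnerProductSpace.Core ℝ U :=
    { inner := fun x y => B x y
      conj_inner_symm := fun x y => hB y x
      re_inner_nonneg := hnonneg
      definite := fun x hx => Subtype.ext <| by_contra fun hne => (hpos x x.2 hne).ne' hx
      add_left := fun x y z => by simp
      smul_left := fun x y t => by simp }
  let _ : NormedAddCommGroup U := core.toNormedAddCommGroup
  let _ : InnerProductSpace ℝ U := InnerProductSpace.ofCore core.toCore
  have : ProperSpace U := FiniteDimensional.proper ℝ U
  have hnorm : ∀ u : U, ‖u‖ ^ 2 = B u u := fun u => (real_inner_self_eq_norm_sq u).symm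
  have hfin : (Subtype.val ⁻¹' s : Set U).Finite := by
    refine Metric.finite_of_isBounded_of_pairwise_le_dist
      (isBounded_iff_forall_norm_le.2 ⟨r + 1, fun u hu => ?_⟩) one_pos fun u hu u' hu' hne => ?_
    · nlinarith [hnorm u, hr _ hu, norm_nonneg u]
    · have h1 : 1 ≤ B (u - u' : U) (u - u' : U) := hsep hu hu' (Subtype.coe_injective.ne hne)
      have h2 := hnorm (u - u')
      show 1 ≤ dist u u'
      rw [dist_eq_norm]
      nlinarith [norm_nonneg (u - u')]
  have := hfin.image Subtype.val
  rwa [Set.image_preimage_eq_of_subset (by simpa using hsU)] at this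

namespace BasedRootSystem

variable {V : Type*} [AddCommGroup V] [Module ℝ V] {R : BasedRootSystem V}

section Cone

variable (R) in
/-- The cone `ℝ_{≥0}Π`, as a pointed cone (see `nnCone_eq_hull`). -/
abbrev cone : PointedCone ℝ V := PointedCone.hull ℝ R.simples

lemma simple_mem_cone {α : V} (hα : α ∈ R.simples) : α ∈ R.cone :=
  PointedCone.subset_hull hα

lemma finsupp_eq_zero_of_sum_eq_zero {c : V →₀ ℝ} (hc : ↑c.support ⊆ R.simples)
    (hc0 : ∀ x, 0 ≤ c x) (hsum : c.sum (fun x r => r • x) = 0) : c = 0 := by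
  refine Finsupp.support_eq_empty.1 (R.posIndep _ hc c (fun x hx => ?_) hsum)
  exact (hc0 x).lt_of_ne (Ne.symm (Finsupp.mem_support_iff.1 hx))

lemma eq_zero_of_mem_cone_of_neg_mem_cone {v : V} (hv : v ∈ R.cone) (hv' : -v ∈ R.cone) :
    v = 0 := by
  classical
  obtain ⟨c, hc, hc0, rfl⟩ := PointedCone.mem_hull_set.1 hv
  obtain ⟨d, hd, hd0, hdv⟩ := PointedCone.mem_hull_set.1 hv'
  have hcd : c + d = 0 := by
    refine finsupp_eq_zero_of_sum_eq_zero (R := R)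
      ((Finset.coe_subset.2 Finsupp.support_add).trans ?_) (fun x => add_nonneg (hc0 x) (hd0 x)) ?_
    · exact Finset.coe_union c.support d.support ▸ Set.union_subset hc hd
    · rw [Finsupp.sum_add_index' (h := fun x r => r • x) (fun x => zero_smul ℝ x)
        (fun x _ _ => add_smul _ _ x), hdv, add_neg_cancel]
  have : c = 0 := Finsupp.ext fun x => by
    have := congr($hcd x)
    simp only [Finsupp.add_apply, Finsupp.coe_zero, Pi.zero_apply] at this ⊢
    linarith [hc0 x, hd0 x]
  simp [this]

lemma exists_eq_smul_add_of_mem_cone {γ v : V} (hγ : γ ∈ R.simples) (hv : v ∈ R.cone) :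
    ∃ t : ℝ, 0 ≤ t ∧ ∃ v' ∈ PointedCone.hull ℝ (R.simples \ {γ}), v = t • γ + v' := by
  rw [cone, ← Set.insert_eq_of_mem hγ, ← Set.insert_sdiff_singleton] at hv
  obtain ⟨t, v', hv', rfl⟩ := Submodule.mem_span_insert.1 hv
  exact ⟨t, t.2, v', hv', by rw [Nonneg.coe_smul]⟩

end Cone

section Reflection

variable (R) in
noncomputable def refl (α : V) (h : R.form α α = 1) : V ≃ₗ[ℝ] V :=
  Module.reflection (x := α) (f := (2 : ℝ) • R.form.flip α) (by simp [h])

variable {α : V} (h : R.form α α = 1)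

lemma refl_apply (v : V) : R.refl α h v = v - (2 * R.form v α) • α := by
  simp [refl, Module.reflection_apply]

@[simp]
lemma refl_apply_self : R.refl α h α = -α := Module.reflection_apply_self _

@[simp]
lemma refl_inv : (R.refl α h)⁻¹ = R.refl α h := Module.reflection_inv _

@[simp]
lemma refl_mul_self : R.refl α h * R.refl α h = 1 :=
  mul_eq_one_iff_eq_inv.2 (refl_inv h).symm

lemma isRefl_iff {g : V ≃ₗ[ℝ] V} : R.IsRefl α g ↔ g = R.refl α h := by
  simp only [IsRefl, h, LinearEquiv.ext_iff, refl_apply]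
  norm_num

@[simp]
lemma form_refl_refl (u v : V) : R.form (R.refl α h u) (R.refl α h v) = R.form u v := by
  simp only [refl_apply, map_sub, map_smul, LinearMap.sub_apply, LinearMap.smul_apply,
    smul_eq_mul, h, R.form_symm α v]
  ring

end Reflection

section Group

variable (R) in
noncomputable abbrev simpleRefl {α : V} (hα : α ∈ R.simples) : V ≃ₗ[ℝ] V :=
  R.refl α (R.norm_one α hα)

variable (R) in
def simpleRefls : Set (V ≃ₗ[ℝ] V) := { g | ∃ α ∈ R.simples, R.IsRefl α g }

lemma mem_simpleRefls {g : V ≃ₗ[ℝ] V} :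
    g ∈ R.simpleRefls ↔ ∃ (α : V) (hα : α ∈ R.simples), g = R.simpleRefl hα := by
  refine exists_congr fun α => ⟨fun ⟨hα, hg⟩ => ⟨hα, ?_⟩, fun ⟨hα, hg⟩ => ⟨hα, ?_⟩⟩
  · exact (isRefl_iff _).1 hg
  · exact (isRefl_iff (R.norm_one α hα)).2 hg

lemma simpleRefl_mem_W {α : V} (hα : α ∈ R.simples) : R.simpleRefl hα ∈ R.W :=
  Subgroup.subset_closure (mem_simpleRefls.2 ⟨α, hα, rfl⟩)

lemma form_apply_apply {w : V ≃ₗ[ℝ] V} (hw : w ∈ R.W) (u v : V) :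
    R.form (w u) (w v) = R.form u v := by
  induction hw using Subgroup.closure_induction generalizing u v with
  | mem g hg =>
    obtain ⟨α, hα, rfl⟩ := mem_simpleRefls.1 hg
    exact form_refl_refl _ u v
  | one => rfl
  | mul x y _ _ hx hy => exact (hx _ _).trans (hy u v)
  | inv x _ hx => rw [← hx, LinearEquiv.coe_inv, x.apply_symm_apply, x.apply_symm_apply]

lemma form_apply_self_eq_one {w : V ≃ₗ[ℝ] V} (hw : w ∈ R.W) {β : V} (hβ : β ∈ R.simples) :
    R.form (w β) (w β) = 1 := by
  rw [form_apply_apply hw, R.norm_one β hβ]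

lemma form_self_eq_one_of_mem_roots {α : V} (hα : α ∈ R.roots) : R.form α α = 1 := by
  obtain ⟨w, hw, β, hβ, rfl⟩ := hα
  exact form_apply_self_eq_one hw hβ

lemma apply_sub_mem_span {w : V ≃ₗ[ℝ] V} (hw : w ∈ R.W) (v : V) :
    w v - v ∈ Submodule.span ℝ R.simples := by
  induction hw using Subgroup.closure_induction generalizing v with
  | mem g hg =>
    obtain ⟨α, hα, rfl⟩ := mem_simpleRefls.1 hg
    rw [refl_apply, sub_sub_cancel_left]
    exact neg_mem (Submodule.smul_mem _ _ (Submodule.subset_span hα))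
  | one => simp
  | mul x y _ _ hx hy => simpa using add_mem (hx (y v)) (hy v)
  | inv x _ hx => simpa using neg_mem (hx (x⁻¹ v))

lemma mul_refl_of_apply_eq {w : V ≃ₗ[ℝ] V} (hw : w ∈ R.W) {φ ψ : V} (hφ : R.form φ φ = 1)
    (hψ : R.form ψ ψ = 1) (h : w φ = ψ) : w * R.refl φ hφ = R.refl ψ hψ * w := by
  subst h
  ext v
  simp only [LinearEquiv.mul_apply, refl_apply, map_sub, map_smul, form_apply_apply hw]

@[simp]
lemma mul_simpleRefl_mul_simpleRefl (w : V ≃ₗ[ℝ] V) {β : V} (hβ : β ∈ R.simples) :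
    w * R.simpleRefl hβ * R.simpleRefl hβ = w := by
  rw [mul_assoc, refl_mul_self, mul_one]

@[simp]
lemma mul_simpleRefl_apply_self (w : V ≃ₗ[ℝ] V) {β : V} (hβ : β ∈ R.simples) :
    (w * R.simpleRefl hβ) β = -w β := by
  rw [LinearEquiv.mul_apply, refl_apply_self, map_neg]

lemma prod_mem_W {l : List (V ≃ₗ[ℝ] V)} (hl : ∀ g ∈ l, g ∈ R.simpleRefls) : l.prod ∈ R.W :=
  Subgroup.list_prod_mem _ fun g hg => Subgroup.subset_closure (hl g hg)

lemma exists_word {w : V ≃ₗ[ℝ] V} (hw : w ∈ R.W) :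
    ∃ l : List (V ≃ₗ[ℝ] V), (∀ g ∈ l, g ∈ R.simpleRefls) ∧ l.prod = w := by
  induction hw using Subgroup.closure_induction_left with
  | one => exact ⟨[], by simp, rfl⟩
  | mul_left g hg y _ ih =>
    obtain ⟨l, hl, rfl⟩ := ih
    exact ⟨g :: l, List.forall_mem_cons.2 ⟨hg, hl⟩, rfl⟩
  | inv_mul_cancel g hg y _ ih =>
    obtain ⟨l, hl, rfl⟩ := ih
    obtain ⟨α, hα, rfl⟩ := mem_simpleRefls.1 hg
    exact ⟨_ :: l, List.forall_mem_cons.2 ⟨hg, hl⟩, by rw [refl_inv, List.prod_cons]⟩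

lemma length_prod_le {l : List (V ≃ₗ[ℝ] V)} (hl : ∀ g ∈ l, g ∈ R.simpleRefls) :
    R.length l.prod ≤ l.length :=
  Nat.sInf_le ⟨l, rfl, hl, rfl⟩

lemma exists_reduced_word {w : V ≃ₗ[ℝ] V} (hw : w ∈ R.W) :
    ∃ l : List (V ≃ₗ[ℝ] V), (∀ g ∈ l, g ∈ R.simpleRefls) ∧ l.prod = w ∧
      l.length = R.length w := by
  obtain ⟨l₀, hl₀, rfl⟩ := exists_word hw
  obtain ⟨l, hlen, hl, hprod⟩ := Nat.sInf_mem (s := {n | ∃ l : List (V ≃ₗ[ℝ] V),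
    l.length = n ∧ (∀ g ∈ l, g ∈ R.simpleRefls) ∧ l₀.prod = l.prod}) ⟨_, l₀, rfl, hl₀, rfl⟩
  exact ⟨l, hl, hprod.symm, hlen⟩

lemma exists_length_mul_simpleRefl_lt {w : V ≃ₗ[ℝ] V} (hw : w ∈ R.W) (h1 : w ≠ 1) :
    ∃ (τ : V) (hτ : τ ∈ R.simples), R.length (w * R.simpleRefl hτ) < R.length w := by
  obtain ⟨l, hl, rfl, hlen⟩ := exists_reduced_word hw
  have hne : l ≠ [] := by rintro rfl; exact h1 rfl
  obtain ⟨τ, hτ, hlast⟩ := mem_simpleRefls.1 (hl _ (List.getLast_mem hne))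
  refine ⟨τ, hτ, ?_⟩
  have hdrop : l.prod * R.simpleRefl hτ = l.dropLast.prod := by
    conv_lhs => rw [← List.dropLast_append_getLast hne]
    rw [List.prod_append, List.prod_singleton, hlast, mul_simpleRefl_mul_simpleRefl]
  rw [hdrop, ← hlen]
  refine (length_prod_le fun g hg => hl g (List.dropLast_subset _ hg)).trans_lt ?_
  rw [List.length_dropLast]
  exact Nat.sub_lt (List.length_pos_iff.2 hne) one_pos

end Group

lemma exists_eq_cos_or_one_le {α β : V} (hα : α ∈ R.simples) (hβ : β ∈ R.simples)
    (hne : α ≠ β) : (∃ m : ℕ, 2 ≤ m ∧ -R.form α β = cos (π / m)) ∨ 1 ≤ -R.form α β := by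
  rcases R.pairing α hα β hβ hne with ⟨m, hm, h⟩ | h
  · exact Or.inl ⟨m, hm, by rw [h, neg_neg]⟩
  · exact Or.inr (by linarith)

lemma form_nonpos_of_ne {α β : V} (hα : α ∈ R.simples) (hβ : β ∈ R.simples) (hne : α ≠ β) :
    R.form α β ≤ 0 := by
  rcases exists_eq_cos_or_one_le hα hβ hne with ⟨m, hm, h⟩ | h
  · have hm' : (2 : ℝ) ≤ m := by exact_mod_cast hm
    have h0 : 0 ≤ π / m := by positivity
    have : 0 ≤ cos (π / m) :=
      cos_nonneg_of_mem_Icc ⟨by linarith [pi_pos], div_le_div_of_nonneg_left pi_pos.le two_pos hm'⟩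
    linarith
  · linarith

section Dihedral

variable {β τ : V} (hβ : R.form β β = 1) (hτ : R.form τ τ = 1)

lemma exists_apply_eq_U_eval {x : V ≃ₗ[ℝ] V}
    (hx : x ∈ Subgroup.closure {R.refl β hβ, R.refl τ hτ}) :
    ∃ k j : ℤ, |j - k| = 1 ∧
      x β = (U ℝ k).eval (-R.form β τ) • β + (U ℝ j).eval (-R.form β τ) • τ := by
  set c := -R.form β τ
  have hβτ : R.form β τ = -c := by simp [c]
  have hτβ : R.form τ β = -c := by rw [R.form_symm, hβτ]
  let orbit : Set V := {v | ∃ k j : ℤ, |j - k| = 1 ∧ v = (U ℝ k).eval c • β + (U ℝ j).eval c • τ}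
  -- `s_β` and `s_τ` act on the indices by `(k, j) ↦ (2j - k, j)` and `(k, j) ↦ (k, 2k - j)`
  have step : ∀ g ∈ ({R.refl β hβ, R.refl τ hτ} : Set (V ≃ₗ[ℝ] V)), ∀ v ∈ orbit, g v ∈ orbit := by
    rintro g (rfl | rfl) v ⟨k, j, hkj, rfl⟩
    · refine ⟨2 * j - k, j, by rw [← abs_sub_comm, ← hkj]; congr 1; ring, ?_⟩
      rw [refl_apply, ← two_mul_mul_U_eval_sub_U_eval (abs_sub_comm j k ▸ hkj)]
      simp only [map_add, map_smul, LinearMap.add_apply, LinearMap.smul_apply, smul_eq_mul, hβ,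
        hτβ]
      module
    · refine ⟨k, 2 * k - j, by rw [← hkj, ← abs_neg]; congr 1; ring, ?_⟩
      rw [refl_apply, ← two_mul_mul_U_eval_sub_U_eval hkj]
      simp only [map_add, map_smul, LinearMap.add_apply, LinearMap.smul_apply, smul_eq_mul, hτ,
        hβτ]
      module
  suffices x β ∈ orbit from this
  induction hx using Subgroup.closure_induction_left with
  | one => exact ⟨0, -1, by norm_num, by simp⟩
  | mul_left g hg y _ ih => exact step g hg _ ih
  | inv_mul_cancel g hg y _ ih =>
    have hinv : g⁻¹ = g := by obtain rfl | rfl := hg <;> exact refl_inv _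
    exact hinv ▸ step g hg (y β) ih

end Dihedral

lemma exists_apply_eq_smul_add_smul {β τ : V} (hβ : β ∈ R.simples) (hτ : τ ∈ R.simples)
    (hne : β ≠ τ) {x : V ≃ₗ[ℝ] V}
    (hx : x ∈ Subgroup.closure {R.simpleRefl hβ, R.simpleRefl hτ}) :
    ∃ a b : ℝ, x β = a • β + b • τ ∧ 0 ≤ a * b := by
  obtain ⟨k, j, hkj, hx⟩ := exists_apply_eq_U_eval _ _ hx
  refine ⟨_, _, hx, ?_⟩
  have hU : ∀ n : ℤ, 0 ≤ (U ℝ n).eval (-R.form β τ) * (U ℝ (n + 1)).eval (-R.form β τ) := by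
    rcases exists_eq_cos_or_one_le hβ hτ hne with ⟨m, hm, h⟩ | h
    · exact h ▸ U_eval_mul_nonneg_cos_pi_div hm
    · exact U_eval_mul_nonneg_of_one_le h
  rcases abs_eq zero_le_one |>.1 hkj with h | h
  · exact (show j = k + 1 by omega) ▸ hU k
  · rw [mul_comm]; exact (show k = j + 1 by omega) ▸ hU j

lemma exists_eq_smul_of_neg_refl_mem_cone {γ φ : V} (hγ : γ ∈ R.simples) (hφ : φ ∈ R.cone)
    (hneg : -R.simpleRefl hγ φ ∈ R.cone) : ∃ t : ℝ, 0 ≤ t ∧ φ = t • γ := by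
  obtain ⟨a, ha, φ', hφ', rfl⟩ := exists_eq_smul_add_of_mem_cone hγ hφ
  obtain ⟨b, -, ψ', hψ', hψ⟩ := exists_eq_smul_add_of_mem_cone hγ hneg
  set e := 2 * R.form (a • γ + φ') γ - a - b
  have hsum : φ' + ψ' = e • γ := by
    rw [refl_apply] at hψ
    rw [show ψ' = -(a • γ + φ' - (2 * R.form (a • γ + φ') γ) • γ) - b • γ by rw [hψ]; abel]
    module
  -- pairing with `γ`: the left side is `≤ 0`, the right side is `e`
  have he : e ≤ 0 := by
    have hoff : ∀ v ∈ PointedCone.hull ℝ (R.simples \ {γ}), R.form v γ ≤ 0 := fun v hv =>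
      neg_nonneg.1 <| PointedCone.nonneg_of_mem_hull (f := -R.form.flip γ)
        (fun x hx => neg_nonneg.2 (form_nonpos_of_ne hx.1 hγ hx.2)) hv
    have := congr(R.form $hsum γ)
    rw [map_add, LinearMap.add_apply, map_smul, LinearMap.smul_apply, R.norm_one γ hγ,
      smul_eq_mul, mul_one] at this
    linarith [hoff φ' hφ', hoff ψ' hψ']
  have hmono : PointedCone.hull ℝ (R.simples \ {γ}) ≤ R.cone := Submodule.span_mono Set.sdiff_subset
  have hφ'0 : φ' = 0 := by
    refine eq_zero_of_mem_cone_of_neg_mem_cone (hmono hφ') ?_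
    rw [show -φ' = ψ' + (-e) • γ by rw [neg_smul, ← hsum]; abel]
    exact add_mem (hmono hψ') (PointedCone.smul_mem _ (neg_nonneg.2 he) (simple_mem_cone hγ))
  exact ⟨a, ha, by rw [hφ'0, add_zero]⟩

lemma eq_of_neg_refl_mem_cone {γ φ : V} (hγ : γ ∈ R.simples) (hφ1 : R.form φ φ = 1)
    (hφ : φ ∈ R.cone) (hneg : -R.simpleRefl hγ φ ∈ R.cone) : φ = γ := by
  obtain ⟨t, ht, rfl⟩ := exists_eq_smul_of_neg_refl_mem_cone hγ hφ hneg
  simp only [map_smul, LinearMap.smul_apply, smul_eq_mul, R.norm_one γ hγ, mul_one] at hφ1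
  rw [show t = 1 by nlinarith, one_smul]

/-- The exchange condition. -/
lemma exists_mul_simpleRefl_eq_prod_eraseIdx {β : V} (hβ : β ∈ R.simples) :
    ∀ l : List (V ≃ₗ[ℝ] V), (∀ g ∈ l, g ∈ R.simpleRefls) →
      (∀ k < l.length, (l.drop (k + 1)).prod β ∈ R.cone ∨ -(l.drop (k + 1)).prod β ∈ R.cone) →
      -l.prod β ∈ R.cone → ∃ i < l.length, l.prod * R.simpleRefl hβ = (l.eraseIdx i).prod
  | [], _, _, hneg => by
    have := R.norm_one β hβ
    rw [eq_zero_of_mem_cone_of_neg_mem_cone (simple_mem_cone hβ) hneg] at this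
    simp at this
  | g :: l, hl, hdich, hneg => by
    rw [List.forall_mem_cons] at hl
    obtain ⟨δ, hδ, rfl⟩ := mem_simpleRefls.1 hl.1
    rcases hdich 0 (Nat.succ_pos _) with hpos | hneg'
    · have hδ' : l.prod β = δ := eq_of_neg_refl_mem_cone hδ
        (form_apply_self_eq_one (prod_mem_W hl.2) hβ) hpos hneg
      refine ⟨0, Nat.succ_pos _, ?_⟩
      rw [List.prod_cons, mul_assoc,
        mul_refl_of_apply_eq (prod_mem_W hl.2) _ (R.norm_one δ hδ) hδ', ← mul_assoc,
        refl_mul_self, one_mul, List.eraseIdx_cons_zero]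
    · obtain ⟨i, hi, heq⟩ := exists_mul_simpleRefl_eq_prod_eraseIdx hβ l hl.2
        (fun k hk => hdich (k + 1) (Nat.succ_lt_succ hk)) hneg'
      exact ⟨i + 1, Nat.succ_lt_succ hi, by
        rw [List.prod_cons, mul_assoc, heq, List.eraseIdx_cons_succ, List.prod_cons]⟩

lemma length_mul_simpleRefl_lt_of_neg_mem_cone {w : V ≃ₗ[ℝ] V} (hw : w ∈ R.W) {β : V}
    (hβ : β ∈ R.simples) (hneg : -w β ∈ R.cone)
    (hdich : ∀ v ∈ R.W, R.length v < R.length w → v β ∈ R.cone ∨ -v β ∈ R.cone) :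
    R.length (w * R.simpleRefl hβ) < R.length w := by
  obtain ⟨l, hl, rfl, hlen⟩ := exists_reduced_word hw
  have hsuffix : ∀ k < l.length, R.length (l.drop (k + 1)).prod < R.length l.prod := fun k hk =>
    (length_prod_le fun g hg => hl g (List.mem_of_mem_drop hg)).trans_lt <| by
      rw [List.length_drop]; omega
  obtain ⟨i, hi, heq⟩ := exists_mul_simpleRefl_eq_prod_eraseIdx hβ l hl (fun k hk => hdich _
    (prod_mem_W fun g hg => hl g (List.mem_of_mem_drop hg)) (hsuffix k hk)) hneg
  rw [heq, ← hlen]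
  refine (length_prod_le fun g hg => hl g (List.mem_of_mem_eraseIdx hg)).trans_lt ?_
  rw [List.length_eraseIdx_of_lt hi]
  omega

lemma mem_cone_or_neg_mem_cone_of_forall {v : V ≃ₗ[ℝ] V} (hv : v ∈ R.W) {γ : V}
    (hγ : γ ∈ R.simples) (H : ∀ u ∈ R.W, R.length u ≤ R.length v →
      R.length u ≤ R.length (u * R.simpleRefl hγ) → u γ ∈ R.cone) :
    v γ ∈ R.cone ∨ -v γ ∈ R.cone := by
  rcases le_or_gt (R.length v) (R.length (v * R.simpleRefl hγ)) with h | h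
  · exact Or.inl (H v hv le_rfl h)
  · refine Or.inr ?_
    have := H _ (mul_mem hv (simpleRefl_mem_W hγ)) h.le (by simpa using h.le)
    rwa [mul_simpleRefl_apply_self] at this

theorem mem_cone_of_length_le {w : V ≃ₗ[ℝ] V} (hw : w ∈ R.W) {β : V} (hβ : β ∈ R.simples)
    (hlen : R.length w ≤ R.length (w * R.simpleRefl hβ)) : w β ∈ R.cone := by
  induction hn : R.length w using Nat.strong_induction_on generalizing w β with
  | _ n ih =>
  subst hn
  by_cases h1 : w = 1
  · exact h1 ▸ simple_mem_cone hβ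
  obtain ⟨τ, hτ, hτlt⟩ := exists_length_mul_simpleRefl_lt hw h1
  have hne : β ≠ τ := by rintro rfl; omega
  -- replace `w` by the shortest element `w x` of the coset `w ⟨s_β, s_τ⟩`
  set D := Subgroup.closure {R.simpleRefl hβ, R.simpleRefl hτ}
  have hβD : R.simpleRefl hβ ∈ D := Subgroup.subset_closure (Set.mem_insert _ _)
  have hτD : R.simpleRefl hτ ∈ D := Subgroup.subset_closure (Set.mem_insert_of_mem _ rfl)
  obtain ⟨x, hxD, hmin⟩ := (InvImage.wf (fun y => R.length (w * y)) wellFounded_lt).has_min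
    (D : Set (V ≃ₗ[ℝ] V)) ⟨_, hτD⟩
  have hmin' : ∀ y ∈ D, R.length (w * x) ≤ R.length (w * x * y) := fun y hy => by
    rw [mul_assoc]; exact not_lt.1 (hmin _ (mul_mem hxD hy))
  have hu : w * x ∈ R.W := mul_mem hw <| (Subgroup.closure_le _).2 (Set.insert_subset_iff.2
    ⟨simpleRefl_mem_W hβ, Set.singleton_subset_iff.2 (simpleRefl_mem_W hτ)⟩) hxD
  have hulen : R.length (w * x) < R.length w := (not_lt.1 (hmin _ hτD)).trans_lt hτlt
  have huβ := ih _ hulen hu hβ (hmin' _ hβD) rfl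
  have huτ := ih _ hulen hu hτ (hmin' _ hτD) rfl
  obtain ⟨a, b, hx, hab⟩ := exists_apply_eq_smul_add_smul hβ hτ hne (inv_mem hxD)
  have hwβ : w β = a • (w * x) β + b • (w * x) τ := by
    rw [show w β = (w * x) (x⁻¹ β) by simp, hx, map_add, map_smul, map_smul]
  rcases mul_nonneg_iff.1 hab with ⟨ha, hb⟩ | ⟨ha, hb⟩
  · rw [hwβ]
    exact add_mem (PointedCone.smul_mem _ ha huβ) (PointedCone.smul_mem _ hb huτ)
  · have hneg : -w β ∈ R.cone := by
      rw [hwβ, neg_add, ← neg_smul, ← neg_smul]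
      exact add_mem (PointedCone.smul_mem _ (neg_nonneg.2 ha) huβ)
        (PointedCone.smul_mem _ (neg_nonneg.2 hb) huτ)
    have := length_mul_simpleRefl_lt_of_neg_mem_cone hw hβ hneg fun v hv hvlen =>
      mem_cone_or_neg_mem_cone_of_forall hv hβ fun u hu hle hlen' =>
        ih _ (hle.trans_lt hvlen) hu hβ hlen' rfl
    omega

theorem mem_cone_or_neg_mem_cone {w : V ≃ₗ[ℝ] V} (hw : w ∈ R.W) {β : V} (hβ : β ∈ R.simples) :
    w β ∈ R.cone ∨ -w β ∈ R.cone :=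
  mem_cone_or_neg_mem_cone_of_forall hw hβ fun _ hu _ => mem_cone_of_length_le hu hβ

lemma exists_neg_mem_cone_of_ne_one {w : V ≃ₗ[ℝ] V} (hw : w ∈ R.W) (h1 : w ≠ 1) :
    ∃ τ ∈ R.simples, -w τ ∈ R.cone := by
  obtain ⟨τ, hτ, hlt⟩ := exists_length_mul_simpleRefl_lt hw h1
  have := mem_cone_of_length_le (mul_mem hw (simpleRefl_mem_W hτ)) hτ (by simpa using hlt.le)
  exact ⟨τ, hτ, by rwa [mul_simpleRefl_apply_self] at this⟩

theorem mem_cone_of_mem_roots_of_mem_chamber {α : V} (hα : α ∈ R.roots) (hc : α ∈ R.chamber) :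
    α ∈ R.cone := by
  obtain ⟨w, hw, β, hβ, rfl⟩ := hα
  refine (mem_cone_or_neg_mem_cone hw hβ).resolve_right fun hneg => ?_
  have := PointedCone.nonneg_of_mem_hull (f := R.form (w β)) (fun x hx => hc x hx) hneg
  rw [map_neg, form_apply_self_eq_one hw hβ] at this
  norm_num at this

section Finite

lemma form_finsupp_sum (c : V →₀ ℝ) (x : V) :
    R.form (c.sum fun y r => r • y) x = ∑ y ∈ c.support, c y * R.form y x := by
  simp [Finsupp.sum, map_sum]

lemma simples_eq_support_of_irred (hIrr : R.Irred) {α : V} (hα0 : α ≠ 0) (hc : α ∈ R.chamber)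
    {c : V →₀ ℝ} (hcS : ↑c.support ⊆ R.simples) (hc0 : ∀ x, 0 ≤ c x)
    (hαc : c.sum (fun x r => r • x) = α) : R.simples = ↑c.support := by
  have horth : ∀ a ∈ (c.support : Set V), ∀ b ∈ R.simples \ c.support, R.form a b = 0 := by
    rintro a ha b ⟨hb, hbc⟩
    have hterm : ∀ x ∈ c.support, c x * R.form x b ≤ 0 := fun x hx =>
      mul_nonpos_of_nonneg_of_nonpos (hc0 x)
        (form_nonpos_of_ne (hcS hx) hb (by rintro rfl; exact hbc hx))
    have hsum : ∑ x ∈ c.support, c x * R.form x b = 0 :=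
      le_antisymm (Finset.sum_nonpos hterm) (form_finsupp_sum (R := R) c b ▸ hαc ▸ hc b hb)
    exact (mul_eq_zero.1 ((Finset.sum_eq_zero_iff_of_nonpos hterm).1 hsum a ha)).resolve_left
      (Finsupp.mem_support_iff.1 ha)
  rcases hIrr _ _ (Set.union_sdiff_cancel hcS) horth with h | h
  · refine (hα0 ?_).elim
    rw [← hαc, Finsupp.support_eq_empty.1 (Finset.coe_eq_empty.1 h), Finsupp.sum_zero_index]
  · exact (Set.sdiff_eq_empty.1 h).antisymm hcS

variable (R) in
def gram (Δ : Finset V) : Matrix Δ Δ ℝ := Matrix.of fun i j => R.form i j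

lemma gram_isSymm (Δ : Finset V) : (R.gram Δ).IsSymm :=
  Matrix.IsSymm.ext fun i j => R.form_symm j i

lemma gram_mulVec_apply (Δ : Finset V) (a : Δ → ℝ) (i : Δ) :
    (R.gram Δ *ᵥ a) i = R.form i (∑ j, a j • (j : V)) := by
  simp [gram, mulVec, dotProduct, map_sum, mul_comm]

lemma form_sum_smul_sum_smul (Δ : Finset V) (a b : Δ → ℝ) :
    R.form (∑ i, a i • (i : V)) (∑ j, b j • (j : V)) = a ⬝ᵥ R.gram Δ *ᵥ b := by
  simp only [dotProduct, gram_mulVec_apply, map_sum, map_smul, LinearMap.sum_apply,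
    LinearMap.smul_apply, smul_eq_mul, Finset.mul_sum]
  rw [Finset.sum_comm]
  exact Finset.sum_congr rfl fun i _ => Finset.sum_congr rfl fun j _ => by ring

theorem exists_posDef_gram_of_irred (hIrr : R.Irred) {α : V} (hα : α ∈ R.roots)
    (hc : α ∈ R.chamber) : ∃ Δ : Finset V, R.simples = ↑Δ ∧ (R.gram Δ).PosDef := by
  obtain ⟨c, hcS, hc0, hαc⟩ :=
    PointedCone.mem_hull_set.1 (mem_cone_of_mem_roots_of_mem_chamber hα hc)
  have hα1 := form_self_eq_one_of_mem_roots hα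
  have hα0 : α ≠ 0 := by rintro rfl; simp at hα1
  have hS := simples_eq_support_of_irred hIrr hα0 hc hcS hc0 hαc
  have hcα : ∑ j : c.support, c j • (j : V) = α := (Finset.sum_coe_sort _ _).trans hαc
  have hmulVec : ∀ i, (R.gram c.support *ᵥ fun j => c j) i = R.form α i := fun i => by
    rw [gram_mulVec_apply, hcα, R.form_symm]
  refine ⟨c.support, hS, Matrix.posDef_of_offDiag_nonpos (gram_isSymm _)
    (fun i j hij => form_nonpos_of_ne (hcS i.2) (hcS j.2) (Subtype.coe_injective.ne hij))
    (fun i => (hc0 i).lt_of_ne (Finsupp.mem_support_iff.1 i.2).symm)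
    (fun i => hmulVec i ▸ hc i (hcS i.2)) ?_ fun S hS0 => ?_⟩
  · by_contra! h
    nth_rewrite 1 [← hcα] at hα1
    simp only [map_sum, LinearMap.sum_apply, map_smul, LinearMap.smul_apply, smul_eq_mul,
      R.form_symm _ α, ← hmulVec] at hα1
    linarith [Finset.sum_nonpos (s := (Finset.univ : Finset c.support)) fun i _ =>
      mul_nonpos_of_nonneg_of_nonpos (hc0 i) (h i)]
  · have hunion : Subtype.val '' S ∪ Subtype.val '' Sᶜ = R.simples := by
      rw [← Set.image_union, Set.union_compl_self, Set.image_univ, hS, Subtype.range_coe]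
    rcases hIrr _ _ hunion fun _ ⟨i, hi, hi'⟩ _ ⟨j, hj, hj'⟩ => hi' ▸ hj' ▸ hS0 i hi j hj
      with h | h
    · exact Or.inl (Set.image_eq_empty.1 h)
    · exact Or.inr (Set.compl_empty_iff.1 (Set.image_eq_empty.1 h))

section PosDef

variable {Δ : Finset V} (hΔ : R.simples = ↑Δ) (hpos : (R.gram Δ).PosDef)
include hΔ

lemma exists_eq_sum_smul_of_mem_span {u : V} (hu : u ∈ Submodule.span ℝ R.simples) :
    ∃ a : Δ → ℝ, u = ∑ i, a i • (i : V) := by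
  rw [hΔ, show (Δ : Set V) = Set.range ((↑) : Δ → V) by simp,
    Submodule.mem_span_range_iff_exists_fun] at hu
  obtain ⟨a, rfl⟩ := hu
  exact ⟨a, rfl⟩

include hpos

lemma form_self_pos_of_posDef_gram {u : V} (hu : u ∈ Submodule.span ℝ R.simples)
    (hu0 : u ≠ 0) : 0 < R.form u u := by
  obtain ⟨a, rfl⟩ := exists_eq_sum_smul_of_mem_span hΔ hu
  rw [form_sum_smul_sum_smul]
  exact hpos.dotProduct_mulVec_pos (x := a) (by rintro rfl; simp at hu0)

lemma exists_form_eq_one_of_posDef_gram :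
    ∃ v₀ ∈ Submodule.span ℝ R.simples, ∀ x ∈ R.simples, R.form v₀ x = 1 := by
  classical
  obtain ⟨a, ha⟩ := mulVec_surjective_iff_isUnit.2 hpos.isUnit (fun _ => 1)
  refine ⟨∑ i, a i • (i : V), Submodule.sum_mem _ fun i _ =>
    Submodule.smul_mem _ _ (Submodule.subset_span (hΔ ▸ i.2)), fun x hx => ?_⟩
  rw [hΔ] at hx
  rw [R.form_symm, ← gram_mulVec_apply Δ a ⟨x, hx⟩, ha]

end PosDef

lemma one_le_form_sub_apply {v₀ : V} (hv₀1 : ∀ x ∈ R.simples, R.form v₀ x = 1)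
    (hnonneg : ∀ u ∈ Submodule.span ℝ R.simples, 0 ≤ R.form u u) {w : V ≃ₗ[ℝ] V} (hw : w ∈ R.W)
    (hw1 : w ≠ 1) : 1 ≤ R.form (v₀ - w v₀) (v₀ - w v₀) := by
  obtain ⟨τ, hτ, hneg⟩ := exists_neg_mem_cone_of_ne_one hw hw1
  set a := v₀ - w v₀
  set t := R.form a (w τ)
  have ht : t ≤ -1 := by
    have h1 : R.form (w v₀) (w τ) = 1 := by rw [form_apply_apply hw, hv₀1 τ hτ]
    have h2 := PointedCone.nonneg_of_mem_hull (f := R.form v₀)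
      (fun x hx => (hv₀1 x hx).symm ▸ zero_le_one) hneg
    simp only [t, a, map_sub, LinearMap.sub_apply, h1, map_neg] at h2 ⊢
    linarith
  have haU : a ∈ Submodule.span ℝ R.simples := by
    simpa [a] using neg_mem (apply_sub_mem_span hw v₀)
  have hτU : w τ ∈ Submodule.span ℝ R.simples := by
    simpa using add_mem (apply_sub_mem_span hw τ) (Submodule.subset_span hτ)
  -- Cauchy–Schwarz against the unit vector `w τ`
  have hCS := hnonneg (a - t • w τ) (sub_mem haU (Submodule.smul_mem _ _ hτU))
  simp only [map_sub, map_smul, LinearMap.sub_apply, LinearMap.smul_apply, smul_eq_mul,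
    form_apply_self_eq_one hw hτ, R.form_symm (w τ) a] at hCS
  nlinarith

theorem W_finite_of_posDef_gram {Δ : Finset V} (hΔ : R.simples = ↑Δ)
    (hpos : (R.gram Δ).PosDef) : (R.W : Set (V ≃ₗ[ℝ] V)).Finite := by
  set U := Submodule.span ℝ R.simples
  have : FiniteDimensional ℝ U := FiniteDimensional.span_of_finite ℝ (hΔ ▸ Δ.finite_toSet)
  have hQ : ∀ u ∈ U, u ≠ 0 → 0 < R.form u u := fun _ hu =>
    form_self_pos_of_posDef_gram hΔ hpos hu
  have hnonneg : ∀ u ∈ U, 0 ≤ R.form u u := fun u hu => by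
    rcases eq_or_ne u 0 with rfl | hu0
    · simp
    · exact (hQ u hu hu0).le
  obtain ⟨v₀, hv₀, hv₀1⟩ := exists_form_eq_one_of_posDef_gram hΔ hpos
  have hsep : ∀ w ∈ R.W, ∀ w' ∈ R.W, w ≠ w' → 1 ≤ R.form (w v₀ - w' v₀) (w v₀ - w' v₀) := by
    intro w hw w' hw' hne
    have := one_le_form_sub_apply hv₀1 hnonneg (mul_mem (inv_mem hw) hw')
      (by rwa [Ne, inv_mul_eq_one])
    rwa [← form_apply_apply hw, map_sub, LinearEquiv.mul_apply, LinearEquiv.coe_inv,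
      w.apply_symm_apply] at this
  refine Set.Finite.of_finite_image (f := fun w => w v₀) ?_ fun w hw w' hw' h => ?_
  · refine finite_of_form_separated R.form R.form_symm U hQ ?_ (r := R.form v₀ v₀) ?_ ?_
    · rintro _ ⟨w, hw, rfl⟩
      simpa using add_mem (apply_sub_mem_span hw v₀) hv₀
    · rintro _ ⟨w, hw, rfl⟩
      exact (form_apply_apply hw _ _).le
    · rintro _ ⟨w, hw, rfl⟩ _ ⟨w', hw', rfl⟩ hne
      exact hsep w hw w' hw' fun h => hne (h ▸ rfl)
  · by_contra hne
    have := hsep w hw w' hw' hne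
    simp only [h, sub_self, map_zero] at this
    norm_num at this

end Finite

end BasedRootSystem

/-- if `α ∈ Φ ∩ 𝒞` then `α` is a positive root, and if moreover
`(W,S)` is irreducible then `W` is finite. -/
theorem statement9 {V : Type*} [AddCommGroup V] [Module ℝ V]
    (R : BasedRootSystem V) (α : V)
    (hα : α ∈ R.roots) (hc : α ∈ R.chamber) :
    α ∈ R.posRoots ∧ (R.Irred → (R.W : Set (V ≃ₗ[ℝ] V)).Finite) := by
  refine ⟨⟨hα, ?_⟩, fun hIrr => ?_⟩
  · rw [nnCone_eq_hull]
    exact BasedRootSystem.mem_cone_of_mem_roots_of_mem_chamber hα hc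
  · obtain ⟨Δ, hΔ, hpos⟩ := BasedRootSystem.exists_posDef_gram_of_irred hIrr hα hc
    exact BasedRootSystem.W_finite_of_posDef_gram hΔ hpos
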